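/- arXiv:math/0509381 — 3 statements merged into one kernel-verified Lean document; each statement's English description precedes it below -/
import Mathlib

section
/- For the Beltrami coefficient μ(z) = (z/z̄)·(2 − ln(2)·csc²(η/2))/(2 + ln(2)·csc²(η/2)) of the previous statement, the limit set Λ(μ) = {p : for every open neighborhood U of p, ess sup_U |μ| = 1} equals the extended nonnegative real axis [0,∞] ⊂ ℂ̂. -/
open Real Complex MeasureTheory OnePoint

/-- The argument `η ∈ (0, 2π)` of a complex number off the nonnegative real axis. -/
noncomputable def etaArg (z : ℂ) : ℝ :=
  if 0 < Complex.arg z then Complex.arg z else Complex.arg z + 2 * Real.pi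

/-- The Beltrami coefficient `μ(z) = (z/z̄)·(2 − ln 2·csc²(η/2))/(2 + ln 2·csc²(η/2))`. -/
noncomputable def muCoeff (z : ℂ) : ℂ :=
  (z / (starRingEnd ℂ) z) *
    (((2 - Real.log 2 * (1 / Real.sin (etaArg z / 2)) ^ 2) /
      (2 + Real.log 2 * (1 / Real.sin (etaArg z / 2)) ^ 2) : ℝ) : ℂ)

lemma norm_muCoeff (z : ℂ) (hz : z ≠ 0) :
    ‖muCoeff z‖ = |(2 - Real.log 2 * (1 / Real.sin (etaArg z / 2)) ^ 2) /
      (2 + Real.log 2 * (1 / Real.sin (etaArg z / 2)) ^ 2)| := by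
  have hc : (starRingEnd ℂ) z ≠ 0 := by simpa using hz
  rw [muCoeff, norm_mul, norm_div,
    Complex.norm_conj, div_self (norm_ne_zero_iff.2 hz), one_mul, Complex.norm_real,
    Real.norm_eq_abs]

lemma ratio_abs_le (L M t : ℝ) (hL0 : 0 < L) (hL1 : L < 1) (ht : L ≤ t) (htM : t ≤ M) :
    |(2 - t) / (2 + t)| ≤ ((2 + M) - 2 * L) / (2 + M) := by
  have h2t : (0:ℝ) < 2 + t := by linarith
  have h2M : (0:ℝ) < 2 + M := by linarith
  rw [abs_div, abs_of_pos h2t, div_le_div_iff₀ h2t h2M]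
  rcases abs_cases (2 - t) with ⟨he, _⟩ | ⟨he, _⟩ <;> rw [he] <;> nlinarith

lemma ratio_abs_ge (m t : ℝ) (hm : 4 ≤ m) (htm : m ≤ t) :
    (m - 4) / m ≤ |(2 - t) / (2 + t)| := by
  have h2t : (0:ℝ) < 2 + t := by linarith
  have hm0 : (0:ℝ) < m := by linarith
  rw [abs_div, abs_of_pos h2t, abs_of_nonpos (by linarith : 2 - t ≤ 0),
    div_le_div_iff₀ hm0 h2t]
  nlinarith

/-- If `z` lies outside the closed sector `{|arg| ≤ δ}`, then `etaArg z ∈ (δ, 2π-δ)`. -/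
lemma etaArg_mem_of_sector {δ : ℝ} (hδ0 : 0 < δ) (hδ1 : δ ≤ 1) {z : ℂ}
    (h : z.re < Real.cos δ * ‖z‖) : δ < etaArg z ∧ etaArg z < 2 * Real.pi - δ := by
  have hδπ : δ < Real.pi := by linarith [Real.pi_gt_three]
  have hz : z ≠ 0 := by
    rintro rfl
    simp at h
  have hnz : (0:ℝ) < ‖z‖ := norm_pos_iff.2 hz
  have hcos : Real.cos (Complex.arg z) < Real.cos δ := by
    have hca := Complex.cos_arg hz
    rw [hca, div_lt_iff₀ hnz]
    exact h
  have habs : δ < |Complex.arg z| := by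
    by_contra hle
    push_neg at hle
    have h1 : Real.cos δ ≤ Real.cos |Complex.arg z| :=
      Real.cos_le_cos_of_nonneg_of_le_pi (abs_nonneg _) hδπ.le hle
    rw [Real.cos_abs] at h1
    linarith
  rcases abs_cases (Complex.arg z) with ⟨he, _⟩ | ⟨he, hneg⟩
  · rw [he] at habs
    have hpos : 0 < Complex.arg z := lt_trans hδ0 habs
    rw [etaArg, if_pos hpos]
    exact ⟨habs, by linarith [Complex.arg_le_pi z]⟩
  · rw [he] at habs
    have hneg' : Complex.arg z < -δ := by linarith
    have : ¬ (0 < Complex.arg z) := by linarith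
    rw [etaArg, if_neg this]
    constructor
    · linarith [Complex.neg_pi_lt_arg z]
    · linarith

/-- `sin (δ/2) ≤ sin x` for `x ∈ [δ/2, π - δ/2]`. -/
lemma sin_ge_of_mem {δ x : ℝ} (hδ0 : 0 < δ) (hδ1 : δ ≤ 1) (hx1 : δ / 2 ≤ x)
    (hx2 : x ≤ Real.pi - δ / 2) : Real.sin (δ / 2) ≤ Real.sin x := by
  have hδπ : δ < Real.pi := by linarith [Real.pi_gt_three]
  rcases le_or_gt x (Real.pi / 2) with hc | hc
  · exact Real.sin_le_sin_of_le_of_le_pi_div_two (by linarith) hc hx1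
  · rw [← Real.sin_pi_sub x]
    exact Real.sin_le_sin_of_le_of_le_pi_div_two (by linarith) (by linarith) (by linarith)

/-- Away from the ray, `‖muCoeff‖` is bounded by a constant `< 1`. -/
lemma mu_bound_away {δ : ℝ} (hδ0 : 0 < δ) (hδ1 : δ ≤ 1) :
    ∃ c : ℝ, c < 1 ∧ ∀ z : ℂ, z.re < Real.cos δ * ‖z‖ → ‖muCoeff z‖ ≤ c := by
  have hδπ : δ < Real.pi := by linarith [Real.pi_gt_three]
  have hL0 : 0 < Real.log 2 := Real.log_pos (by norm_num)
  have hL1 : Real.log 2 < 1 := by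
    have := Real.log_two_lt_d9; linarith
  have hsd : 0 < Real.sin (δ / 2) :=
    Real.sin_pos_of_pos_of_lt_pi (by linarith) (by linarith [Real.pi_gt_three])
  set M : ℝ := Real.log 2 / Real.sin (δ / 2) ^ 2 with hM
  have hM0 : 0 < M := by positivity
  refine ⟨((2 + M) - 2 * Real.log 2) / (2 + M), ?_, ?_⟩
  · rw [div_lt_one (by linarith)]; linarith
  · intro z hsec
    obtain ⟨h1, h2⟩ := etaArg_mem_of_sector hδ0 hδ1 hsec
    have hz : z ≠ 0 := by rintro rfl; simp at hsec
    have hsin : Real.sin (δ / 2) ≤ Real.sin (etaArg z / 2) :=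
      sin_ge_of_mem hδ0 hδ1 (by linarith) (by linarith)
    have hs0 : 0 < Real.sin (etaArg z / 2) := lt_of_lt_of_le hsd hsin
    have hs1 : Real.sin (etaArg z / 2) ≤ 1 := Real.sin_le_one _
    set t : ℝ := Real.log 2 * (1 / Real.sin (etaArg z / 2)) ^ 2 with htdef
    have htL : Real.log 2 ≤ t := by
      rw [htdef]
      nlinarith [sq_nonneg (1 - 1 / Real.sin (etaArg z / 2)),
        one_le_one_div hs0 hs1]
    have htM : t ≤ M := by
      have h2 : Real.sin (δ / 2) ^ 2 ≤ Real.sin (etaArg z / 2) ^ 2 := by nlinarith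
      have h3 := inv_anti₀ (by positivity) h2
      rw [htdef, hM, one_div, inv_pow, div_eq_mul_inv]
      exact mul_le_mul_of_nonneg_left h3 hL0.le
    rw [norm_muCoeff z hz]
    exact ratio_abs_le (Real.log 2) M t hL0 hL1 htL htM

/-- Near the ray, `‖muCoeff‖` exceeds any constant `< 1`. -/
lemma mu_bound_near {c : ℝ} (hc : c < 1) :
    ∃ δ : ℝ, 0 < δ ∧ δ ≤ 1 ∧
      ∀ z : ℂ, 0 < z.im → Real.cos δ * ‖z‖ < z.re → c ≤ ‖muCoeff z‖ := by
  have hL0 : 0 < Real.log 2 := Real.log_pos (by norm_num)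
  set m : ℝ := max (4 / (1 - c)) 4 with hmdef
  have hm4 : 4 ≤ m := le_max_right _ _
  have hm0 : (0:ℝ) < m := by linarith
  have hcm : c ≤ (m - 4) / m := by
    rcases le_or_gt c 0 with h | h
    · exact h.trans (div_nonneg (by linarith) (by linarith))
    · have h4 : 4 / (1 - c) ≤ m := le_max_left _ _
      rw [div_le_iff₀ (by linarith)] at h4
      rw [le_div_iff₀ hm0]
      nlinarith
  refine ⟨min (Real.sqrt (Real.log 2 / m)) 1, lt_min (Real.sqrt_pos.2 (by positivity))
    one_pos, min_le_right _ _, ?_⟩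
  set δ : ℝ := min (Real.sqrt (Real.log 2 / m)) 1 with hδdef
  have hδ0 : 0 < δ := lt_min (Real.sqrt_pos.2 (by positivity)) one_pos
  have hδ1 : δ ≤ 1 := min_le_right _ _
  have hδπ : δ < Real.pi := by linarith [Real.pi_gt_three]
  intro z him hsec
  have hz : z ≠ 0 := by
    rintro rfl; simp at him
  have hnz : (0:ℝ) < ‖z‖ := norm_pos_iff.2 hz
  -- arg z ∈ (0, δ)
  have harg0 : 0 < Complex.arg z := by
    have h1 : 0 ≤ Complex.arg z := Complex.arg_nonneg_iff.2 him.le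
    rcases h1.lt_or_eq with h | h
    · exact h
    · exfalso
      replace h := h.symm
      rw [Complex.arg_eq_zero_iff] at h
      linarith [h.2]
  have hcos : Real.cos δ < Real.cos (Complex.arg z) := by
    have hca := Complex.cos_arg hz
    rw [hca, lt_div_iff₀ hnz]
    exact hsec
  have hargδ : Complex.arg z < δ := by
    by_contra hle
    push_neg at hle
    have := Real.cos_le_cos_of_nonneg_of_le_pi hδ0.le (Complex.arg_le_pi z) hle
    linarith
  have heta : etaArg z = Complex.arg z := by rw [etaArg, if_pos harg0]
  have hs0 : 0 < Real.sin (etaArg z / 2) := by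
    rw [heta]
    exact Real.sin_pos_of_pos_of_lt_pi (by linarith) (by linarith)
  -- sin(η/2) < sqrt(L/m)
  have hsin_lt : Real.sin (etaArg z / 2) ^ 2 < Real.log 2 / m := by
    have h1 : Real.sin (etaArg z / 2) ≤ etaArg z / 2 := Real.sin_le (by linarith [heta])
    have h2 : etaArg z / 2 < δ := by rw [heta]; linarith
    have h3 : δ ≤ Real.sqrt (Real.log 2 / m) := min_le_left _ _
    have h4 : Real.sin (etaArg z / 2) < Real.sqrt (Real.log 2 / m) := by linarith
    have := Real.sq_sqrt (show (0:ℝ) ≤ Real.log 2 / m by positivity)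
    nlinarith
  set t : ℝ := Real.log 2 * (1 / Real.sin (etaArg z / 2)) ^ 2 with htdef
  have htm : m ≤ t := by
    have hs2 : 0 < Real.sin (etaArg z / 2) ^ 2 := by positivity
    have hml : m * Real.sin (etaArg z / 2) ^ 2 < Real.log 2 := by
      rw [lt_div_iff₀ hm0] at hsin_lt
      linarith
    rw [htdef, one_div, inv_pow, ← div_eq_mul_inv, le_div_iff₀ hs2]
    linarith
  rw [norm_muCoeff z hz]
  calc c ≤ (m - 4) / m := hcm
    _ ≤ _ := ratio_abs_ge m t hm4 htm

/-- Points `a + t·e^{iδ/2}` lie in the open cone `{0 < im, cos δ·‖w‖ < re}`. -/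
lemma cone_mem {δ : ℝ} (hδ0 : 0 < δ) (hδ1 : δ ≤ 1) (a t : ℝ) (ha : 0 ≤ a) (ht : 0 < t) :
    0 < ((a : ℂ) + (t : ℂ) * ((Real.cos (δ/2) : ℂ) + (Real.sin (δ/2) : ℂ) * Complex.I)).im ∧
    Real.cos δ * ‖(a : ℂ) + (t : ℂ) * ((Real.cos (δ/2) : ℂ) + (Real.sin (δ/2) : ℂ) * Complex.I)‖
      < ((a : ℂ) + (t : ℂ) * ((Real.cos (δ/2) : ℂ) + (Real.sin (δ/2) : ℂ) * Complex.I)).re ∧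
    ‖((a : ℂ) + (t : ℂ) * ((Real.cos (δ/2) : ℂ) + (Real.sin (δ/2) : ℂ) * Complex.I)) - (a:ℂ)‖
      = t := by
  have hπ : (3:ℝ) < Real.pi := Real.pi_gt_three
  set u : ℂ := (Real.cos (δ/2) : ℂ) + (Real.sin (δ/2) : ℂ) * Complex.I with hu
  have hure : u.re = Real.cos (δ/2) := by
    simp only [hu, Complex.add_re, Complex.ofReal_re, Complex.mul_re, Complex.I_re,
      Complex.I_im, Complex.ofReal_im]
    ring
  have huim : u.im = Real.sin (δ/2) := by
    simp only [hu, Complex.add_im, Complex.ofReal_im, Complex.mul_im, Complex.I_re,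
      Complex.I_im, Complex.ofReal_re]
    ring
  have hsin : 0 < Real.sin (δ/2) :=
    Real.sin_pos_of_pos_of_lt_pi (by linarith) (by linarith)
  have hcoshalf : 0 < Real.cos (δ/2) :=
    Real.cos_pos_of_mem_Ioo ⟨by linarith, by linarith⟩
  have hunorm : ‖u‖ = 1 := by
    rw [Complex.norm_def, Complex.normSq_apply, hure, huim,
      show Real.cos (δ/2) * Real.cos (δ/2) + Real.sin (δ/2) * Real.sin (δ/2) = 1 by
        nlinarith [Real.sin_sq_add_cos_sq (δ/2)]]
    exact Real.sqrt_one
  set w : ℂ := (a : ℂ) + (t : ℂ) * u with hw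
  have hwre : w.re = a + t * Real.cos (δ/2) := by
    rw [hw, Complex.add_re, Complex.ofReal_re, Complex.mul_re, Complex.ofReal_re,
      Complex.ofReal_im, hure, huim]
    ring
  have hwim : w.im = t * Real.sin (δ/2) := by
    rw [hw, Complex.add_im, Complex.ofReal_im, Complex.mul_im, Complex.ofReal_re,
      Complex.ofReal_im, hure, huim]
    ring
  have hdiff : ‖w - (a:ℂ)‖ = t := by
    rw [hw, add_sub_cancel_left, norm_mul, hunorm, mul_one, Complex.norm_real,
      Real.norm_eq_abs, _root_.abs_of_pos ht]
  refine ⟨by rw [hwim]; positivity, ?_, hdiff⟩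
  have hwnorm : ‖w‖ ≤ a + t := by
    calc ‖w‖ ≤ ‖(a:ℂ)‖ + ‖(t:ℂ) * u‖ := norm_add_le _ _
      _ = a + t := by
          rw [norm_mul, hunorm, mul_one, Complex.norm_real, Complex.norm_real,
            Real.norm_eq_abs, Real.norm_eq_abs, _root_.abs_of_nonneg ha, _root_.abs_of_pos ht]
  have hcos1 : Real.cos δ < Real.cos (δ/2) :=
    Real.strictAntiOn_cos ⟨by linarith, by linarith⟩ ⟨hδ0.le, by linarith⟩ (by linarith)
  have hcos0 : 0 ≤ Real.cos δ := Real.cos_nonneg_of_mem_Icc ⟨by linarith, by linarith⟩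
  have hcosle : Real.cos δ ≤ 1 := Real.cos_le_one δ
  rw [hwre]
  nlinarith [mul_le_mul_of_nonneg_left hwnorm hcos0]

/-- Key lower bound: if every small cone meets `U`, the essential sup is `≥ 1`. -/
lemma key_lower [MeasurableSpace (OnePoint ℂ)] [BorelSpace (OnePoint ℂ)]
    (ν : Measure (OnePoint ℂ))
    (hν : ν = Measure.map (fun z : ℂ => (z : OnePoint ℂ)) volume)
    (μhat : OnePoint ℂ → ℂ) (hμhat : ∀ z : ℂ, μhat (z : OnePoint ℂ) = muCoeff z)
    (U : Set (OnePoint ℂ)) (hUopen : IsOpen U)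
    (hpt : ∀ δ : ℝ, 0 < δ → δ ≤ 1 →
      ∃ w : ℂ, (0 < w.im ∧ Real.cos δ * ‖w‖ < w.re) ∧ (w : OnePoint ℂ) ∈ U) :
    1 ≤ essSup (fun q => (‖μhat q‖₊ : ENNReal)) (ν.restrict U) := by
  by_contra hlt
  push_neg at hlt
  obtain ⟨c', hsc', hc'1⟩ := exists_between hlt
  have hc'top : c' ≠ ⊤ := hc'1.ne_top
  have hc1 : c'.toReal < 1 := by
    have := (ENNReal.toReal_lt_toReal hc'top ENNReal.one_ne_top).2 hc'1
    rwa [ENNReal.toReal_one] at this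
  obtain ⟨δ, hδ0, hδ1, hbound⟩ := mu_bound_near hc1
  obtain ⟨w0, hw0W, hw0U⟩ := hpt δ hδ0 hδ1
  set S : Set ℂ := ({w : ℂ | 0 < w.im} ∩ {w : ℂ | Real.cos δ * ‖w‖ < w.re}) ∩
    ((fun z : ℂ => (z : OnePoint ℂ)) ⁻¹' U) with hS
  have hSopen : IsOpen S :=
    (((isOpen_lt continuous_const Complex.continuous_im).inter
      (isOpen_lt (continuous_const.mul continuous_norm) Complex.continuous_re)).inter
      (hUopen.preimage OnePoint.continuous_coe))
  have hSne : S.Nonempty := ⟨w0, ⟨hw0W.1, hw0W.2⟩, hw0U⟩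
  have hvol : 0 < volume S := hSopen.measure_pos volume hSne
  have hmc : Measurable (fun z : ℂ => (z : OnePoint ℂ)) := OnePoint.continuous_coe.measurable
  set T : Set (OnePoint ℂ) := (fun z : ℂ => (z : OnePoint ℂ)) '' S with hT
  have hTopen : IsOpen T := OnePoint.isOpen_image_coe.2 hSopen
  have hTmeas : MeasurableSet T := hTopen.measurableSet
  have hTU : T ⊆ U := by rintro q ⟨w, hw, rfl⟩; exact hw.2
  have hνT : ν.restrict U T = volume S := by
    rw [Measure.restrict_apply hTmeas, Set.inter_eq_self_of_subset_left hTU, hν,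
      Measure.map_apply hmc hTmeas, Set.preimage_image_eq _ OnePoint.coe_injective]
  have hae := ENNReal.ae_le_essSup (μ := ν.restrict U) (fun q => (‖μhat q‖₊ : ENNReal))
  have hnull : ν.restrict U {q | ¬ ((‖μhat q‖₊ : ENNReal) ≤
      essSup (fun q => (‖μhat q‖₊ : ENNReal)) (ν.restrict U))} = 0 := ae_iff.1 hae
  have hsub : T ⊆ {q | ¬ ((‖μhat q‖₊ : ENNReal) ≤
      essSup (fun q => (‖μhat q‖₊ : ENNReal)) (ν.restrict U))} := by
    rintro q ⟨w, hw, rfl⟩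
    simp only [Set.mem_setOf_eq, not_le]
    calc essSup (fun q => (‖μhat q‖₊ : ENNReal)) (ν.restrict U) < c' := hsc'
      _ = ENNReal.ofReal c'.toReal := (ENNReal.ofReal_toReal hc'top).symm
      _ ≤ ENNReal.ofReal ‖muCoeff w‖ :=
          ENNReal.ofReal_le_ofReal (hbound w hw.1.1 hw.1.2)
      _ = (‖μhat (w : OnePoint ℂ)‖₊ : ENNReal) := by
          rw [hμhat w, ofReal_norm, enorm_eq_nnnorm]
  have : ν.restrict U T = 0 := measure_mono_null hsub hnull
  rw [hνT] at this
  exact absurd this hvol.ne'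

/-- on the Riemann sphere, the limit set `Λ(μ)` of the Beltrami
coefficient `muCoeff` (points near which `ess sup |μ| = 1` on every neighborhood)
is exactly the extended nonnegative real axis `[0,∞] ⊂ ℂ̂`. -/
theorem stmt_6 [MeasurableSpace (OnePoint ℂ)] [BorelSpace (OnePoint ℂ)]
    (ν : Measure (OnePoint ℂ))
    (hν : ν = Measure.map (fun z : ℂ => (z : OnePoint ℂ)) volume)
    (μhat : OnePoint ℂ → ℂ) (hμhat : ∀ z : ℂ, μhat (z : OnePoint ℂ) = muCoeff z) :
    {p : OnePoint ℂ | ∀ U : Set (OnePoint ℂ), IsOpen U → p ∈ U →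
        1 ≤ essSup (fun q => (‖μhat q‖₊ : ENNReal)) (ν.restrict U)} =
      (fun z : ℂ => (z : OnePoint ℂ)) '' {z : ℂ | z.im = 0 ∧ 0 ≤ z.re} ∪ {∞} := by
  have hπ : (3:ℝ) < Real.pi := Real.pi_gt_three
  ext p
  simp only [Set.mem_setOf_eq, Set.mem_union, Set.mem_image, Set.mem_singleton_iff]
  constructor
  · intro hp
    induction p using OnePoint.rec with
    | infty => exact Or.inr rfl
    | coe z =>
      left
      refine ⟨z, ?_, rfl⟩
      by_contra hzray
      have harg : Complex.arg z ≠ 0 := by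
        rw [Ne, Complex.arg_eq_zero_iff]
        change ¬(z.im = 0 ∧ 0 ≤ z.re) at hzray
        tauto
      have hz0 : z ≠ 0 := by rintro rfl; exact harg Complex.arg_zero
      have hargpos : 0 < |Complex.arg z| := abs_pos.2 harg
      set δ : ℝ := min (|Complex.arg z| / 2) 1 with hδdef
      have hδ0 : 0 < δ := lt_min (by linarith) one_pos
      have hδ1 : δ ≤ 1 := min_le_right _ _
      obtain ⟨c, hc1, hcb⟩ := mu_bound_away hδ0 hδ1
      set A : Set ℂ := {w : ℂ | w.re < Real.cos δ * ‖w‖} with hA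
      have hAopen : IsOpen A :=
        isOpen_lt Complex.continuous_re (continuous_const.mul continuous_norm)
      set U : Set (OnePoint ℂ) := (fun w : ℂ => (w : OnePoint ℂ)) '' A with hUdef
      have hUopen : IsOpen U := OnePoint.isOpen_image_coe.2 hAopen
      have hzA : z ∈ A := by
        have hnz : (0:ℝ) < ‖z‖ := norm_pos_iff.2 hz0
        have hδlt : δ < |Complex.arg z| := lt_of_le_of_lt (min_le_left _ _) (by linarith)
        have hcc : Real.cos |Complex.arg z| < Real.cos δ :=
          Real.strictAntiOn_cos ⟨hδ0.le, by linarith [Complex.abs_arg_le_pi z]⟩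
            ⟨abs_nonneg _, Complex.abs_arg_le_pi z⟩ hδlt
        have hca := Complex.cos_arg hz0
        rw [← Real.cos_abs] at hca
        rw [hca] at hcc
        show z.re < Real.cos δ * ‖z‖
        rw [div_lt_iff₀ hnz] at hcc
        exact hcc
      have hb := hp U hUopen ⟨z, hzA, rfl⟩
      have hUmeas : MeasurableSet U := hUopen.measurableSet
      have hae : ∀ᵐ q ∂(ν.restrict U), (‖μhat q‖₊ : ENNReal) ≤ ENNReal.ofReal c := by
        refine ae_restrict_of_forall_mem hUmeas ?_
        rintro q ⟨w, hw, rfl⟩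
        rw [hμhat w, ← enorm_eq_nnnorm, ← ofReal_norm]
        exact ENNReal.ofReal_le_ofReal (hcb w hw)
      have hess := essSup_le_of_ae_le _ hae
      have hone : (1 : ENNReal) < 1 :=
        lt_of_le_of_lt (hb.trans hess) (ENNReal.ofReal_lt_one.2 hc1)
      exact absurd hone (lt_irrefl _)
  · rintro (⟨x, ⟨hxim, hxre⟩, rfl⟩ | rfl) <;> intro U hUopen hpU <;>
      refine key_lower ν hν μhat hμhat U hUopen ?_
    · -- ray point x
      intro δ hδ0 hδ1
      have hop : IsOpen ((fun z : ℂ => (z : OnePoint ℂ)) ⁻¹' U) :=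
        hUopen.preimage OnePoint.continuous_coe
      obtain ⟨ε, hε0, hball⟩ := Metric.isOpen_iff.1 hop x hpU
      obtain ⟨him, hsec, hdist⟩ := cone_mem hδ0 hδ1 x.re (ε/2) hxre (by linarith)
      set w : ℂ := (x.re : ℂ) + ((ε/2 : ℝ) : ℂ) *
        ((Real.cos (δ/2) : ℂ) + (Real.sin (δ/2) : ℂ) * Complex.I) with hwdef
      have hxeq : (x.re : ℂ) = x := by
        apply Complex.ext
        · simp
        · simp [hxim]
      refine ⟨w, ⟨him, hsec⟩, hball ?_⟩
      rw [Metric.mem_ball, dist_eq_norm, ← hxeq]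
      rw [hdist]
      linarith
    · -- infinity
      intro δ hδ0 hδ1
      have hcpt : IsCompact ((fun z : ℂ => (z : OnePoint ℂ)) ⁻¹' U)ᶜ :=
        ((OnePoint.isOpen_iff_of_mem' hpU).1 hUopen).1
      obtain ⟨R, hR⟩ := hcpt.isBounded.subset_closedBall (0:ℂ)
      set t : ℝ := max R 0 + 1 with htdef
      have ht0 : 0 < t := by positivity
      obtain ⟨him, hsec, hdist⟩ := cone_mem hδ0 hδ1 0 t le_rfl ht0
      set w : ℂ := ((0:ℝ) : ℂ) + ((t : ℝ) : ℂ) *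
        ((Real.cos (δ/2) : ℂ) + (Real.sin (δ/2) : ℂ) * Complex.I) with hwdef
      refine ⟨w, ⟨him, hsec⟩, ?_⟩
      by_contra hwU
      have hmem : w ∈ ((fun z : ℂ => (z : OnePoint ℂ)) ⁻¹' U)ᶜ := hwU
      have hle := hR hmem
      rw [Metric.mem_closedBall, dist_eq_norm, sub_zero] at hle
      have hn : ‖w‖ = t := by rw [← hdist, Complex.ofReal_zero, sub_zero]
      have h2 : R ≤ max R 0 := le_max_left _ _
      rw [hn, htdef] at hle
      linarith
end

section
/- Let w_n : ℂ̂ → ℂ̂ be homeomorphisms converging locally uniformly on an open set Ω ⊆ ℂ̂ to a map w which is a homeomorphism onto its image w(Ω). Let g be a Möbius transformation with g(Ω) = Ω, and suppose each T_n := w_n ∘ g ∘ w_n⁻¹ is a Möbius transformation. If the maps T_n converge pointwise on the open nonempty set w(Ω) to the map T := w ∘ g ∘ w⁻¹ : w(Ω) → w(Ω), and T is a nonconstant continuous injection, then T extends to a Möbius transformation of ℂ̂. -/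
open OnePoint Filter Topology

/-- A map of the Riemann sphere `ℂ̂ = OnePoint ℂ` is a Möbius transformation. -/
def IsMobius (f : OnePoint ℂ → OnePoint ℂ) : Prop :=
  ∃ a b c d : ℂ, a * d - b * c = 1 ∧
    (∀ z : ℂ, (c * z + d ≠ 0 → f (z : OnePoint ℂ) = (((a * z + b) / (c * z + d) : ℂ) : OnePoint ℂ)) ∧
      (c * z + d = 0 → f (z : OnePoint ℂ) = ∞)) ∧
    ((c = 0 → f ∞ = ∞) ∧ (c ≠ 0 → f ∞ = ((a / c : ℂ) : OnePoint ℂ)))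

noncomputable def mf (a b c d : ℂ) : OnePoint ℂ → OnePoint ℂ := fun z =>
  z.elim (if c = 0 then ∞ else ((a / c : ℂ) : OnePoint ℂ))
    (fun u => if c * u + d = 0 then ∞ else (((a * u + b) / (c * u + d) : ℂ) : OnePoint ℂ))

theorem mf_infty (a b c d : ℂ) :
    mf a b c d ∞ = if c = 0 then ∞ else ((a / c : ℂ) : OnePoint ℂ) := rfl

theorem mf_coe (a b c d u : ℂ) : mf a b c d (u : OnePoint ℂ)
    = if c * u + d = 0 then ∞ else (((a * u + b) / (c * u + d) : ℂ) : OnePoint ℂ) := rfl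

theorem isMobius_iff {f : OnePoint ℂ → OnePoint ℂ} :
    IsMobius f ↔ ∃ a b c d : ℂ, a * d - b * c = 1 ∧ ∀ z, f z = mf a b c d z := by
  constructor
  · rintro ⟨a, b, c, d, h1, h2, h3⟩
    refine ⟨a, b, c, d, h1, fun z => ?_⟩
    cases z with
    | infty =>
      rw [mf_infty]
      by_cases hc : c = 0
      · rw [if_pos hc]; exact h3.1 hc
      · rw [if_neg hc]; exact h3.2 hc
    | coe u =>
      rw [mf_coe]
      by_cases hd : c * u + d = 0
      · rw [if_pos hd]; exact (h2 u).2 hd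
      · rw [if_neg hd]; exact (h2 u).1 hd
  · rintro ⟨a, b, c, d, h1, h2⟩
    refine ⟨a, b, c, d, h1, fun z => ⟨fun hz => ?_, fun hz => ?_⟩, fun hc => ?_, fun hc => ?_⟩
    · rw [h2, mf_coe, if_neg hz]
    · rw [h2, mf_coe, if_pos hz]
    · rw [h2, mf_infty, if_pos hc]
    · rw [h2, mf_infty, if_neg hc]

theorem mf_smul {s : ℂ} (hs : s ≠ 0) (a b c d : ℂ) (z : OnePoint ℂ) :
    mf (s * a) (s * b) (s * c) (s * d) z = mf a b c d z := by
  cases z with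
  | infty =>
    rw [mf_infty, mf_infty]
    by_cases hc : c = 0
    · rw [if_pos hc, if_pos (by rw [hc, mul_zero])]
    · rw [if_neg hc, if_neg (mul_ne_zero hs hc)]
      congr 1
      field_simp
  | coe u =>
    rw [mf_coe, mf_coe]
    have he : s * c * u + s * d = s * (c * u + d) := by ring
    by_cases hd : c * u + d = 0
    · rw [if_pos hd, if_pos (by rw [he, hd, mul_zero])]
    · rw [if_neg hd, if_neg (by rw [he]; exact mul_ne_zero hs hd)]
      congr 1
      rw [he]
      have : s * a * u + s * b = s * (a * u + b) := by ring
      rw [this, mul_div_mul_left _ _ hs]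

theorem isMobius_mf {a b c d : ℂ} (h : a * d - b * c ≠ 0) : IsMobius (mf a b c d) := by
  obtain ⟨s, hs⟩ := IsAlgClosed.exists_pow_nat_eq (k := ℂ) (a * d - b * c) (n := 2) (by norm_num)
  have hs0 : s ≠ 0 := by
    intro h0
    rw [h0] at hs
    simp at hs
    exact h hs.symm
  refine isMobius_iff.mpr ⟨s⁻¹ * a, s⁻¹ * b, s⁻¹ * c, s⁻¹ * d, ?_, fun z => ?_⟩
  · have : s⁻¹ * a * (s⁻¹ * d) - s⁻¹ * b * (s⁻¹ * c) = (s^2)⁻¹ * (a * d - b * c) := by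
      rw [pow_two, mul_inv]; ring
    rw [this, hs]
    exact inv_mul_cancel₀ h
  · rw [mf_smul (inv_ne_zero hs0)]

theorem mf_comp {a b c d a' b' c' d' : ℂ} (h2 : a' * d' - b' * c' ≠ 0) (z : OnePoint ℂ) :
    mf a b c d (mf a' b' c' d' z) =
      mf (a * a' + b * c') (a * b' + b * d') (c * a' + d * c') (c * b' + d * d') z := by
  cases z with
  | infty =>
    rw [mf_infty, mf_infty]
    by_cases hc' : c' = 0
    · have ha' : a' ≠ 0 := fun h0 => h2 (by rw [hc', h0]; ring)
      rw [if_pos hc', mf_infty]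
      by_cases hc : c = 0
      · rw [if_pos hc, if_pos (by rw [hc, hc']; ring)]
      · rw [if_neg hc, if_neg (by rw [hc']; simpa using mul_ne_zero hc ha')]
        congr 1
        rw [hc']
        field_simp
        ring
    · rw [if_neg hc', mf_coe]
      by_cases hC : c * a' + d * c' = 0
      · rw [if_pos (by field_simp; linear_combination hC), if_pos hC]
      · rw [if_neg (fun h0 => hC (by field_simp at h0; linear_combination h0)),
          if_neg hC]
        congr 1
        field_simp
  | coe u =>
    rw [mf_coe, mf_coe]
    by_cases hd' : c' * u + d' = 0
    · have hn' : a' * u + b' ≠ 0 := by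
        intro h0
        exact h2 (by linear_combination a' * hd' - c' * h0)
      rw [if_pos hd', mf_infty]
      by_cases hc : c = 0
      · rw [if_pos hc, if_pos (by rw [hc]; linear_combination d * hd')]
      · rw [if_neg hc,
          if_neg (fun h0 => (mul_ne_zero hc hn') (by linear_combination h0 - d * hd'))]
        congr 1
        have : (c * a' + d * c') * u + (c * b' + d * d') = c * (a' * u + b') := by
          linear_combination d * hd'
        rw [this]
        have h1 : (a * a' + b * c') * u + (a * b' + b * d') = a * (a' * u + b') := by
          linear_combination b * hd'
        rw [h1, mul_div_mul_right _ _ hn']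
    · rw [if_neg hd', mf_coe]
      have key : c * ((a' * u + b') / (c' * u + d')) + d
          = ((c * a' + d * c') * u + (c * b' + d * d')) / (c' * u + d') := by
        rw [mul_div_assoc', div_add' _ _ _ hd']
        ring
      by_cases hC : (c * a' + d * c') * u + (c * b' + d * d') = 0
      · rw [if_pos (by rw [key, hC, zero_div]), if_pos hC]
      · rw [if_neg (by rw [key]; exact div_ne_zero hC hd'), if_neg hC]
        congr 1
        rw [key]
        have key2 : a * ((a' * u + b') / (c' * u + d')) + b
            = ((a * a' + b * c') * u + (a * b' + b * d')) / (c' * u + d') := by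
          rw [mul_div_assoc', div_add' _ _ _ hd']
          ring
        rw [key2]
        field_simp

theorem mf_scalar_id {e : ℂ} (he : e ≠ 0) (z : OnePoint ℂ) : mf e 0 0 e z = z := by
  cases z with
  | infty => rw [mf_infty, if_pos rfl]
  | coe u =>
    rw [mf_coe, if_neg (by simpa using he)]
    congr 1
    rw [add_zero, zero_mul, zero_add, mul_div_cancel_left₀ _ he]

theorem mf_left_inv {a b c d : ℂ} (h : a * d - b * c ≠ 0) (z : OnePoint ℂ) :
    mf d (-b) (-c) a (mf a b c d z) = z := by
  rw [mf_comp h z]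
  have e1 : d * a + -b * c = a * d - b * c := by ring
  have e2 : d * b + -b * d = 0 := by ring
  have e3 : -c * a + a * c = 0 := by ring
  have e4 : -c * b + a * d = a * d - b * c := by ring
  rw [e1, e2, e3, e4]
  exact mf_scalar_id h z

theorem mf_right_inv {a b c d : ℂ} (h : a * d - b * c ≠ 0) (z : OnePoint ℂ) :
    mf a b c d (mf d (-b) (-c) a z) = z := by
  have h' : d * a - -b * -c ≠ 0 := by
    intro h0; exact h (by linear_combination h0)
  rw [mf_comp h' z]
  have e1 : a * d + b * -c = a * d - b * c := by ring
  have e2 : a * -b + b * a = 0 := by ring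
  have e3 : c * d + d * -c = 0 := by ring
  have e4 : c * -b + d * a = a * d - b * c := by ring
  rw [e1, e2, e3, e4]
  exact mf_scalar_id h z

/-- A Möbius map fixing `0`, `1`, `∞` is the identity. -/
theorem mf_fix {a b c d : ℂ} (h : a * d - b * c ≠ 0)
    (h0 : mf a b c d ((0 : ℂ) : OnePoint ℂ) = ((0 : ℂ) : OnePoint ℂ))
    (h1 : mf a b c d ((1 : ℂ) : OnePoint ℂ) = ((1 : ℂ) : OnePoint ℂ))
    (hi : mf a b c d ∞ = ∞) : ∀ z, mf a b c d z = z := by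
  have hc : c = 0 := by
    by_contra hc
    rw [mf_infty, if_neg hc] at hi
    exact OnePoint.coe_ne_infty _ hi
  have hd : d ≠ 0 := fun h0' => h (by rw [hc, h0']; ring)
  have ha : a ≠ 0 := fun h0' => h (by rw [hc, h0']; ring)
  have hb : b = 0 := by
    rw [mf_coe] at h0
    rw [if_neg (by simpa [hc] using hd)] at h0
    have := OnePoint.coe_injective h0
    field_simp [hc, hd] at this
    simpa using this
  have had : a = d := by
    rw [mf_coe] at h1
    rw [if_neg (by simp [hc, hd])] at h1
    have := OnePoint.coe_injective h1
    field_simp [hb, hc, hd] at this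
    simpa [hb, hc] using this
  intro z
  cases z with
  | infty => rw [mf_infty, if_pos hc]
  | coe u =>
    rw [mf_coe, hb, hc, had, if_neg (by simpa using hd)]
    congr 1
    rw [add_zero, zero_mul, zero_add, mul_div_cancel_left₀ _ hd]

/-- The cross-ratio map sending `p ↦ 0`, `q ↦ 1`, `r ↦ ∞`. -/
theorem X_apply_p {p q r : ℂ} (hpq : p ≠ q) (hpr : p ≠ r) (hqr : q ≠ r) :
    mf (q - r) (-(p * (q - r))) (q - p) (-(r * (q - p))) (p : OnePoint ℂ)
      = ((0 : ℂ) : OnePoint ℂ) := by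
  rw [mf_coe, if_neg]
  · congr 1
    rw [show (q - r) * p + -(p * (q - r)) = 0 by ring, zero_div]
  · intro h0
    have : (q - p) * (p - r) = 0 := by linear_combination h0
    rcases mul_eq_zero.mp this with h | h
    · exact hpq (by linear_combination -h)
    · exact hpr (by linear_combination h)

theorem X_apply_q {p q r : ℂ} (hpq : p ≠ q) (hpr : p ≠ r) (hqr : q ≠ r) :
    mf (q - r) (-(p * (q - r))) (q - p) (-(r * (q - p))) (q : OnePoint ℂ)
      = ((1 : ℂ) : OnePoint ℂ) := by
  rw [mf_coe, if_neg]
  · congr 1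
    rw [div_eq_one_iff_eq]
    · ring
    · intro h0
      have : (q - p) * (q - r) = 0 := by linear_combination h0
      rcases mul_eq_zero.mp this with h | h
      · exact hpq (by linear_combination -h)
      · exact hqr (by linear_combination h)
  · intro h0
    have : (q - p) * (q - r) = 0 := by linear_combination h0
    rcases mul_eq_zero.mp this with h | h
    · exact hpq (by linear_combination -h)
    · exact hqr (by linear_combination h)

theorem X_apply_r {p q r : ℂ} (hpq : p ≠ q) (hpr : p ≠ r) (hqr : q ≠ r) :
    mf (q - r) (-(p * (q - r))) (q - p) (-(r * (q - p))) (r : OnePoint ℂ) = ∞ := by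
  rw [mf_coe, if_pos (by ring)]

theorem X_det {p q r : ℂ} (hpq : p ≠ q) (hpr : p ≠ r) (hqr : q ≠ r) :
    (q - r) * -(r * (q - p)) - -(p * (q - r)) * (q - p) ≠ 0 := by
  have : (q - r) * -(r * (q - p)) - -(p * (q - r)) * (q - p)
      = (q - r) * (q - p) * (p - r) := by ring
  rw [this]
  exact mul_ne_zero (mul_ne_zero (sub_ne_zero.mpr hqr) (sub_ne_zero.mpr hpq.symm))
    (sub_ne_zero.mpr hpr)

/-- det is multiplicative for 2×2 matrices (entrywise form). -/
theorem det_mul_expand (a b c d a' b' c' d' : ℂ) :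
    (a * a' + b * c') * (c * b' + d * d') - (a * b' + b * d') * (c * a' + d * c')
      = (a * d - b * c) * (a' * d' - b' * c') := by ring

/-- If a Möbius map sends distinct finite points `p,q,r` to distinct finite points
`p',q',r'`, then it factors as (inverse cross-ratio at `p',q',r'`) ∘ (cross-ratio at `p,q,r`). -/
theorem mf_decomp {a b c d p q r p' q' r' : ℂ}
    (hdet : a * d - b * c ≠ 0)
    (hpq : p ≠ q) (hpr : p ≠ r) (hqr : q ≠ r)
    (hpq' : p' ≠ q') (hpr' : p' ≠ r') (hqr' : q' ≠ r')
    (hp : mf a b c d (p : OnePoint ℂ) = (p' : OnePoint ℂ))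
    (hq : mf a b c d (q : OnePoint ℂ) = (q' : OnePoint ℂ))
    (hr : mf a b c d (r : OnePoint ℂ) = (r' : OnePoint ℂ)) (z : OnePoint ℂ) :
    mf a b c d z =
      mf (-(r' * (q' - p'))) (p' * (q' - r')) (-(q' - p')) (q' - r')
        (mf (q - r) (-(p * (q - r))) (q - p) (-(r * (q - p))) z) := by
  -- abbreviations
  set A' : ℂ := q' - r' with hA'
  set B' : ℂ := -(p' * (q' - r')) with hB'
  set C' : ℂ := q' - p' with hC'
  set D' : ℂ := -(r' * (q' - p')) with hD'
  have hdX' : A' * D' - B' * C' ≠ 0 := X_det hpq' hpr' hqr'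
  have hdX : (q - r) * -(r * (q - p)) - -(p * (q - r)) * (q - p) ≠ 0 := X_det hpq hpr hqr
  -- the composite X' ∘ f, as a matrix
  have comp1 : ∀ w, mf A' B' C' D' (mf a b c d w)
      = mf (A' * a + B' * c) (A' * b + B' * d) (C' * a + D' * c) (C' * b + D' * d) w :=
    fun w => mf_comp hdet w
  have hdcomp : (A' * a + B' * c) * (C' * b + D' * d)
      - (A' * b + B' * d) * (C' * a + D' * c) ≠ 0 := by
    rw [show (A' * a + B' * c) * (C' * b + D' * d) - (A' * b + B' * d) * (C' * a + D' * c)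
        = (A' * D' - B' * C') * (a * d - b * c) by ring]
    exact mul_ne_zero hdX' hdet
  -- composite agrees with cross-ratio X at p, q, r
  have hcp : mf (A' * a + B' * c) (A' * b + B' * d) (C' * a + D' * c) (C' * b + D' * d)
      (p : OnePoint ℂ) = ((0 : ℂ) : OnePoint ℂ) := by
    rw [← comp1, hp]; exact X_apply_p hpq' hpr' hqr'
  have hcq : mf (A' * a + B' * c) (A' * b + B' * d) (C' * a + D' * c) (C' * b + D' * d)
      (q : OnePoint ℂ) = ((1 : ℂ) : OnePoint ℂ) := by
    rw [← comp1, hq]; exact X_apply_q hpq' hpr' hqr'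
  have hcr : mf (A' * a + B' * c) (A' * b + B' * d) (C' * a + D' * c) (C' * b + D' * d)
      (r : OnePoint ℂ) = ∞ := by
    rw [← comp1, hr]; exact X_apply_r hpq' hpr' hqr'
  -- so (composite) ∘ (X⁻¹) fixes 0, 1, ∞  ⇒ composite = X
  -- we compare: G := composite ∘ adj(X) fixes 0,1,∞
  set a2 := A' * a + B' * c with ha2
  set b2 := A' * b + B' * d with hb2
  set c2 := C' * a + D' * c with hc2
  set d2 := C' * b + D' * d with hd2
  have comp2 : ∀ w, mf a2 b2 c2 d2 (mf (-(r * (q - p))) (p * (q - r)) (-(q - p)) (q - r) w)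
      = mf (a2 * -(r * (q - p)) + b2 * -(q - p)) (a2 * (p * (q - r)) + b2 * (q - r))
          (c2 * -(r * (q - p)) + d2 * -(q - p)) (c2 * (p * (q - r)) + d2 * (q - r)) w := by
    intro w
    refine mf_comp ?_ w
    intro h0
    exact hdX (by linear_combination h0)
  have hinvX : ∀ w, mf (-(r * (q - p))) (p * (q - r)) (-(q - p)) (q - r)
      (mf (q - r) (-(p * (q - r))) (q - p) (-(r * (q - p))) w) = w := by
    intro w
    have := mf_left_inv hdX w
    rw [neg_neg] at this
    exact this
  have hG : ∀ w, mf (a2 * -(r * (q - p)) + b2 * -(q - p)) (a2 * (p * (q - r)) + b2 * (q - r))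
      (c2 * -(r * (q - p)) + d2 * -(q - p)) (c2 * (p * (q - r)) + d2 * (q - r)) w = w := by
    apply mf_fix
    · rw [show (a2 * -(r * (q - p)) + b2 * -(q - p)) * (c2 * (p * (q - r)) + d2 * (q - r))
          - (a2 * (p * (q - r)) + b2 * (q - r)) * (c2 * -(r * (q - p)) + d2 * -(q - p))
          = (a2 * d2 - b2 * c2) * (-(r * (q - p)) * (q - r) - p * (q - r) * -(q - p)) by ring]
      refine mul_ne_zero hdcomp ?_
      intro h0
      exact hdX (by linear_combination h0)
    · rw [← comp2]
      have := hinvX (p : OnePoint ℂ)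
      rw [X_apply_p hpq hpr hqr] at this
      rw [this]
      exact hcp
    · rw [← comp2]
      have := hinvX (q : OnePoint ℂ)
      rw [X_apply_q hpq hpr hqr] at this
      rw [this]
      exact hcq
    · rw [← comp2]
      have := hinvX (r : OnePoint ℂ)
      rw [X_apply_r hpq hpr hqr] at this
      rw [this]
      exact hcr
  -- conclude: composite = X, i.e. X' (f z) = X z
  have hXX : mf A' B' C' D' (mf a b c d z)
      = mf (q - r) (-(p * (q - r))) (q - p) (-(r * (q - p))) z := by
    rw [comp1]
    conv_lhs => rw [← hinvX z]
    rw [comp2]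
    exact hG _
  -- apply adj(X') on the left
  have := congrArg (mf D' (-B') (-C') A') hXX
  rw [mf_left_inv hdX' (mf a b c d z)] at this
  rw [this, hB', hC', hD']
  congr 2
  ring

theorem tendsto_infty_of_norm {u : ℕ → OnePoint ℂ}
    (h : ∀ R : ℝ, ∀ᶠ n in atTop, ∀ x : ℂ, u n = (x : OnePoint ℂ) → R ≤ ‖x‖) :
    Tendsto u atTop (𝓝 (∞ : OnePoint ℂ)) := by
  rw [OnePoint.hasBasis_nhds_infty.tendsto_right_iff]
  rintro s ⟨hscl, hsc⟩ -- s closed compact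
  obtain ⟨R, hR⟩ := isBounded_iff_forall_norm_le.mp hsc.isBounded
  filter_upwards [h (R + 1)] with n hn
  cases hu : u n with
  | infty => exact Or.inr rfl
  | coe x =>
    left
    refine ⟨x, fun hx => ?_, rfl⟩
    have := hn x hu
    have := hR x hx
    linarith

theorem helper1 {num den : ℕ → ℂ} {L M : ℂ} (hn : Tendsto num atTop (𝓝 L))
    (hd : Tendsto den atTop (𝓝 M)) (hM : M ≠ 0) :
    Tendsto (fun n => if den n = 0 then (∞ : OnePoint ℂ)
      else ((num n / den n : ℂ) : OnePoint ℂ)) atTop (𝓝 ((L / M : ℂ) : OnePoint ℂ)) := by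
  have hne : ∀ᶠ n in atTop, den n ≠ 0 := hd.eventually_ne hM
  have : Tendsto (fun n => ((num n / den n : ℂ) : OnePoint ℂ)) atTop
      (𝓝 ((L / M : ℂ) : OnePoint ℂ)) :=
    (OnePoint.continuous_coe.tendsto _).comp (hn.div hd hM)
  refine this.congr' ?_
  filter_upwards [hne] with n hn0
  rw [if_neg hn0]

theorem helper2 {num den : ℕ → ℂ} {L : ℂ} (hn : Tendsto num atTop (𝓝 L)) (hL : L ≠ 0)
    (hd : Tendsto den atTop (𝓝 0)) :
    Tendsto (fun n => if den n = 0 then (∞ : OnePoint ℂ)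
      else ((num n / den n : ℂ) : OnePoint ℂ)) atTop (𝓝 (∞ : OnePoint ℂ)) := by
  apply tendsto_infty_of_norm
  intro R
  have hL0 : (0 : ℝ) < ‖L‖ := norm_pos_iff.mpr hL
  set ε : ℝ := ‖L‖ / (2 * (|R| + 1)) with hε
  have hεpos : 0 < ε := by
    apply div_pos hL0
    have : (0:ℝ) ≤ |R| := abs_nonneg R
    linarith
  have h1 : ∀ᶠ n in atTop, ‖L‖ / 2 ≤ ‖num n‖ :=
    hn.norm.eventually (eventually_ge_nhds (by linarith))
  have h2 : ∀ᶠ n in atTop, ‖den n‖ < ε := by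
    have := hd.norm
    rw [norm_zero] at this
    exact this.eventually (eventually_lt_nhds hεpos)
  filter_upwards [h1, h2] with n hn1 hn2
  intro x hx
  by_cases h0 : den n = 0
  · rw [if_pos h0] at hx
    exact absurd hx.symm (OnePoint.coe_ne_infty x)
  · rw [if_neg h0] at hx
    have hxx : x = num n / den n := (OnePoint.coe_injective hx.symm)
    have hden : (0:ℝ) < ‖den n‖ := norm_pos_iff.mpr h0
    have key : |R| + 1 ≤ ‖x‖ := by
      rw [hxx, norm_div]
      have step1 : ‖L‖ / 2 / ε ≤ ‖num n‖ / ‖den n‖ := by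
        apply div_le_div₀ (le_trans (by linarith) hn1) hn1 hden (le_of_lt hn2)
      have : ‖L‖ / 2 / ε = |R| + 1 := by
        have hLne : ‖L‖ ≠ 0 := ne_of_gt hL0
        have hRne : |R| + 1 ≠ 0 := by positivity
        rw [hε]
        field_simp
      linarith [step1, this]
    have : R ≤ |R| + 1 := by
      have := le_abs_self R
      linarith
    linarith

theorem tendsto_mf {a b c d : ℕ → ℂ} {A B C D : ℂ}
    (ha : Tendsto a atTop (𝓝 A)) (hb : Tendsto b atTop (𝓝 B))
    (hc : Tendsto c atTop (𝓝 C)) (hd : Tendsto d atTop (𝓝 D))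
    (hdet : A * D - B * C ≠ 0) (z : OnePoint ℂ) :
    Tendsto (fun n => mf (a n) (b n) (c n) (d n) z) atTop (𝓝 (mf A B C D z)) := by
  cases z with
  | infty =>
    simp only [mf_infty]
    by_cases hC : C = 0
    · have hA : A ≠ 0 := by
        intro h0
        exact hdet (by rw [h0, hC]; ring)
      rw [if_pos hC]
      exact helper2 ha hA (by rwa [hC] at hc)
    · rw [if_neg hC]
      exact helper1 ha hc hC
  | coe u =>
    simp only [mf_coe]
    have hnum : Tendsto (fun n => a n * u + b n) atTop (𝓝 (A * u + B)) :=
      ((ha.mul tendsto_const_nhds).add hb)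
    have hden : Tendsto (fun n => c n * u + d n) atTop (𝓝 (C * u + D)) :=
      ((hc.mul tendsto_const_nhds).add hd)
    by_cases hCD : C * u + D = 0
    · have hAB : A * u + B ≠ 0 := by
        intro h0
        exact hdet (by linear_combination A * hCD - C * h0)
      rw [if_pos hCD]
      exact helper2 hnum hAB (by rwa [hCD] at hden)
    · rw [if_neg hCD]
      exact helper1 hnum hden hCD

theorem mf_injective {a b c d : ℂ} (h : a * d - b * c ≠ 0) :
    Function.Injective (mf a b c d) := fun z z' e => by
  have h1 := mf_left_inv h z
  rw [e, mf_left_inv h z'] at h1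
  exact h1.symm

theorem isMobius_congr {f h : OnePoint ℂ → OnePoint ℂ} (e : ∀ z, f z = h z)
    (hm : IsMobius h) : IsMobius f := by
  obtain ⟨a, b, c, d, h1, h2⟩ := isMobius_iff.mp hm
  exact isMobius_iff.mpr ⟨a, b, c, d, h1, fun z => (e z).trans (h2 z)⟩

theorem exists_coe_of_ne_infty {y : OnePoint ℂ} (h : y ≠ ∞) : ∃ x : ℂ, y = (x : OnePoint ℂ) := by
  cases y with
  | infty => exact absurd rfl h
  | coe x => exact ⟨x, rfl⟩

theorem extract {u : ℕ → OnePoint ℂ} {A : ℂ} (h : Tendsto u atTop (𝓝 ((A : OnePoint ℂ)))) :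
    Tendsto (fun n => (u n).elim 0 id) atTop (𝓝 A) ∧
      ∀ᶠ n in atTop, u n = (((u n).elim 0 id : ℂ) : OnePoint ℂ) := by
  have hev : ∀ᶠ n in atTop, u n ∈ Set.range (OnePoint.some (X := ℂ)) :=
    h.eventually (OnePoint.isOpen_range_coe.mem_nhds ⟨A, rfl⟩)
  have hev' : ∀ᶠ n in atTop, u n = (((u n).elim 0 id : ℂ) : OnePoint ℂ) := by
    filter_upwards [hev] with n hn
    obtain ⟨x, hx⟩ := hn
    rw [← hx]
    rfl
  refine ⟨?_, hev'⟩
  rw [(OnePoint.isOpenEmbedding_coe).isInducing.tendsto_nhds_iff]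
  exact h.congr' (by filter_upwards [hev'] with n hn; exact hn)

/-- if homeomorphisms `w_n` of `ℂ̂` converge locally uniformly on an
open set `Ω` to a homeomorphism-onto-image `w`, `g` is Möbius with `g(Ω) = Ω`,
each `T_n = w_n ∘ g ∘ w_n⁻¹` is Möbius, and `T_n → T = w ∘ g ∘ w⁻¹` pointwise on
the nonempty open set `w(Ω)` with `T` a nonconstant continuous injection, then
`T` extends to a Möbius transformation of `ℂ̂`. -/
theorem stmt_9 (Ω : Set (OnePoint ℂ)) (hΩopen : IsOpen Ω) (hΩne : Ω.Nonempty)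
    (wseq : ℕ → (OnePoint ℂ ≃ₜ OnePoint ℂ))
    (w : OnePoint ℂ → OnePoint ℂ)
    (wΩ : C(Ω, OnePoint ℂ)) (hwΩ : ∀ x : Ω, wΩ x = w x)
    -- locally uniform convergence on `Ω`, phrased as convergence of the
    -- restrictions in the compact-open topology:
    (hconv : Tendsto (fun n : ℕ => (wseq n : C(OnePoint ℂ, OnePoint ℂ)).restrict Ω) atTop (nhds wΩ))
    (hwinj : Set.InjOn w Ω) (hwcont : ContinuousOn w Ω)
    (g : OnePoint ℂ → OnePoint ℂ) (hg : IsMobius g) (hgΩ : g '' Ω = Ω)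
    (hTn : ∀ n : ℕ, IsMobius (fun x => wseq n (g ((wseq n).symm x))))
    (T : OnePoint ℂ → OnePoint ℂ)
    (hT : ∀ x ∈ Ω, T (w x) = w (g x))
    (hconvT : ∀ y ∈ w '' Ω,
      Tendsto (fun n : ℕ => wseq n (g ((wseq n).symm y))) atTop (nhds (T y)))
    (hTcont : ContinuousOn T (w '' Ω)) (hTinj : Set.InjOn T (w '' Ω))
    (hTnonconst : ¬ ∃ c, ∀ y ∈ w '' Ω, T y = c) :
    ∃ T' : OnePoint ℂ → OnePoint ℂ, IsMobius T' ∧ ∀ y ∈ w '' Ω, T' y = T y := by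
  classical
  set S := w '' Ω with hS
  obtain ⟨x0, hx0⟩ := hΩne
  have hΩinf : Ω.Infinite := infinite_of_mem_nhds x0 (hΩopen.mem_nhds hx0)
  have hSinf : S.Infinite := Set.Infinite.image hwinj hΩinf
  set bad : Set (OnePoint ℂ) := {∞} ∪ {y ∈ S | T y = ∞} with hbad
  have hbadfin : bad.Finite := by
    refine Set.Finite.union (Set.finite_singleton _) (Set.Subsingleton.finite ?_)
    intro y hy y' hy'
    exact hTinj hy.1 hy'.1 (by rw [hy.2, hy'.2])
  have hS1 : (S \ bad).Infinite := hSinf.diff hbadfin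
  obtain ⟨y1, hy1⟩ := hS1.nonempty
  have hS2 : ((S \ bad) \ {y1}).Infinite := hS1.diff (Set.finite_singleton _)
  obtain ⟨y2, hy2⟩ := hS2.nonempty
  obtain ⟨y3, hy3⟩ := (hS2.diff (Set.finite_singleton y2)).nonempty
  -- unpack memberships
  have hy1S : y1 ∈ S := hy1.1
  have hy2S : y2 ∈ S := hy2.1.1
  have hy3S : y3 ∈ S := hy3.1.1.1
  have hy1i : y1 ≠ ∞ := fun h => hy1.2 (Set.mem_union_left _ (by simp [h]))
  have hy2i : y2 ≠ ∞ := fun h => hy2.1.2 (Set.mem_union_left _ (by simp [h]))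
  have hy3i : y3 ≠ ∞ := fun h => hy3.1.1.2 (Set.mem_union_left _ (by simp [h]))
  have hTy1i : T y1 ≠ ∞ := fun h => hy1.2 (Set.mem_union_right _ ⟨hy1S, h⟩)
  have hTy2i : T y2 ≠ ∞ := fun h => hy2.1.2 (Set.mem_union_right _ ⟨hy2S, h⟩)
  have hTy3i : T y3 ≠ ∞ := fun h => hy3.1.1.2 (Set.mem_union_right _ ⟨hy3S, h⟩)
  have hy21 : y2 ≠ y1 := by simpa using hy2.2
  have hy31 : y3 ≠ y1 := by simpa using hy3.1.2
  have hy32 : y3 ≠ y2 := by simpa using hy3.2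
  obtain ⟨Y1, hY1⟩ := exists_coe_of_ne_infty hy1i
  obtain ⟨Y2, hY2⟩ := exists_coe_of_ne_infty hy2i
  obtain ⟨Y3, hY3⟩ := exists_coe_of_ne_infty hy3i
  obtain ⟨A1, hA1⟩ := exists_coe_of_ne_infty hTy1i
  obtain ⟨A2, hA2⟩ := exists_coe_of_ne_infty hTy2i
  obtain ⟨A3, hA3⟩ := exists_coe_of_ne_infty hTy3i
  have hY12 : Y1 ≠ Y2 := fun h => hy21 (by rw [hY1, hY2, h])
  have hY13 : Y1 ≠ Y3 := fun h => hy31 (by rw [hY1, hY3, h])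
  have hY23 : Y2 ≠ Y3 := fun h => hy32 (by rw [hY2, hY3, h])
  have hA12 : A1 ≠ A2 := fun h =>
    (hTinj.ne hy1S hy2S (fun e => hy21 e.symm)) (by rw [hA1, hA2, h])
  have hA13 : A1 ≠ A3 := fun h =>
    (hTinj.ne hy1S hy3S (fun e => hy31 e.symm)) (by rw [hA1, hA3, h])
  have hA23 : A2 ≠ A3 := fun h =>
    (hTinj.ne hy2S hy3S (fun e => hy32 e.symm)) (by rw [hA2, hA3, h])
  -- matrices of the Möbius maps T_n
  choose a b c d hdet1 hfn using fun n => isMobius_iff.mp (hTn n)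
  have hdetn : ∀ n, a n * d n - b n * c n ≠ 0 := fun n => by
    rw [hdet1 n]; exact one_ne_zero
  -- convergence of the three image points
  have hc1 := hconvT y1 hy1S
  have hc2 := hconvT y2 hy2S
  have hc3 := hconvT y3 hy3S
  rw [hA1] at hc1
  rw [hA2] at hc2
  rw [hA3] at hc3
  obtain ⟨hα, hαe⟩ := extract hc1
  obtain ⟨hβ, hβe⟩ := extract hc2
  obtain ⟨hγ, hγe⟩ := extract hc3
  set α : ℕ → ℂ := fun n => (wseq n (g ((wseq n).symm y1))).elim 0 id with hαdef
  set β : ℕ → ℂ := fun n => (wseq n (g ((wseq n).symm y2))).elim 0 id with hβdef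
  set γ : ℕ → ℂ := fun n => (wseq n (g ((wseq n).symm y3))).elim 0 id with hγdef
  -- the limit Möbius map
  have hKdet : (Y2 - Y3) * -(Y3 * (Y2 - Y1)) - -(Y1 * (Y2 - Y3)) * (Y2 - Y1) ≠ 0 :=
    X_det hY12 hY13 hY23
  set K : OnePoint ℂ → OnePoint ℂ :=
    fun z => mf (Y2 - Y3) (-(Y1 * (Y2 - Y3))) (Y2 - Y1) (-(Y3 * (Y2 - Y1))) z with hK
  set T' : OnePoint ℂ → OnePoint ℂ :=
    fun z => mf (-(A3 * (A2 - A1))) (A1 * (A2 - A3)) (-(A2 - A1)) (A2 - A3) (K z) with hT'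
  have hAdet : -(A3 * (A2 - A1)) * (A2 - A3) - A1 * (A2 - A3) * -(A2 - A1) ≠ 0 := by
    rw [show -(A3 * (A2 - A1)) * (A2 - A3) - A1 * (A2 - A3) * -(A2 - A1)
        = (A2 - A1) * (A2 - A3) * (A1 - A3) by ring]
    exact mul_ne_zero (mul_ne_zero (sub_ne_zero.mpr (Ne.symm hA12))
      (sub_ne_zero.mpr hA23)) (sub_ne_zero.mpr hA13)
  refine ⟨T', ?_, ?_⟩
  · -- T' is Möbius
    refine isMobius_congr (fun z => mf_comp hKdet z) (isMobius_mf ?_)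
    rw [det_mul_expand]
    exact mul_ne_zero hAdet hKdet
  · -- T' agrees with T on S
    intro y hy
    -- for large n, T_n y = (adj X'_n) (K y)
    have hkey : ∀ᶠ n in atTop,
        wseq n (g ((wseq n).symm y)) =
          mf (-(γ n * (β n - α n))) (α n * (β n - γ n)) (-(β n - α n)) (β n - γ n) (K y) := by
      filter_upwards [hαe, hβe, hγe] with n h1 h2 h3
      have e1 : mf (a n) (b n) (c n) (d n) y1 = ((α n : ℂ) : OnePoint ℂ) := by
        rw [← hfn n y1]; exact h1
      have e2 : mf (a n) (b n) (c n) (d n) y2 = ((β n : ℂ) : OnePoint ℂ) := by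
        rw [← hfn n y2]; exact h2
      have e3 : mf (a n) (b n) (c n) (d n) y3 = ((γ n : ℂ) : OnePoint ℂ) := by
        rw [← hfn n y3]; exact h3
      have hinj := mf_injective (hdetn n)
      have hαβ : α n ≠ β n := fun h => by
        rw [h] at e1
        exact hy21 (hinj (e2.trans e1.symm))
      have hαγ : α n ≠ γ n := fun h => by
        rw [h] at e1
        exact hy31 (hinj (e3.trans e1.symm))
      have hβγ : β n ≠ γ n := fun h => by
        rw [h] at e2
        exact hy32 (hinj (e3.trans e2.symm))
      have := mf_decomp (hdetn n) hY12 hY13 hY23 hαβ hαγ hβγ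
        (by rw [← hY1]; exact e1) (by rw [← hY2]; exact e2) (by rw [← hY3]; exact e3) y
      rw [hfn n y]
      exact this
    have hlim1 : Tendsto (fun n =>
        mf (-(γ n * (β n - α n))) (α n * (β n - γ n)) (-(β n - α n)) (β n - γ n) (K y))
        atTop (𝓝 (T' y)) := by
      apply tendsto_mf ((hγ.mul (hβ.sub hα)).neg) (hα.mul (hβ.sub hγ))
        ((hβ.sub hα).neg) (hβ.sub hγ) hAdet
    have hlim2 : Tendsto (fun n =>
        mf (-(γ n * (β n - α n))) (α n * (β n - γ n)) (-(β n - α n)) (β n - γ n) (K y))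
        atTop (𝓝 (T y)) := by
      refine (hconvT y hy).congr' ?_
      filter_upwards [hkey] with n hn
      exact hn
    exact tendsto_nhds_unique hlim1 hlim2
end

section
/- Let R_n be the rectangle in ℂ with vertices −i/(2n), i/(2n), l + i/(2n), l − i/(2n) (l > 0 fixed), and let F : R_n → ℂ be a map in W^{1,2}(R_n) with |∂̄F| ≤ δ_n|∂F| a.e., where δ_n ∈ [0,1). Then the length of the image of the segment [0,l] satisfies (1/n)·length(F([0,l])) ≤ (Area(F(R_n)))^{1/2} · ((1−δ_n)/(1+δ_n))^{1/2} · (l/n)^{1/2}, provided length(F([0,l])) ≤ ∫₀^l |∂F(x+iy)|·(1−δ_n) dx holds for each horizontal slice y and Fubini applies. Consequently, if Area(F(R_n)) ≤ S and δ_n = 1 − 1/(n+1)⁴, then length(F([0,l])) ≤ √S · (l·n/(1+(1+n)⁴))^{1/2} → 0 as n → ∞. -/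
open MeasureTheory

set_option maxHeartbeats 1000000

/-- length–area estimate on thin rectangles. If `F` has
`|∂̄F| ≤ δ_n|∂F|` on the rectangle `R_n` with `δ_n = 1 − 1/(n+1)⁴`, the length
`L` of `F([0,l])` is bounded on each horizontal slice by
`∫₀^l |∂F|(1−δ_n) dx`, and the area integral `∬(|∂F|² − |∂̄F|²)` is at most `S`,
then `L ≤ √S·(l·n/(1+(1+n)⁴))^{1/2}`. -/
theorem stmt_16 (n : ℕ) (hn : 1 ≤ n) (l : ℝ) (hl : 0 < l)
    (F : ℂ → ℂ) (S L δ : ℝ) (hL : 0 ≤ L) (hS : 0 ≤ S)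
    (hδ : δ = 1 - 1 / ((n : ℝ) + 1) ^ 4)
    (Rn : Set ℂ)
    (hRn : Rn = {z : ℂ | z.re ∈ Set.Icc 0 l ∧
      z.im ∈ Set.Icc (-(1 / (2 * (n : ℝ)))) (1 / (2 * (n : ℝ)))})
    (pd pdb : ℂ → ℝ)
    (hpd : pd = fun z => ‖
      ((fderiv ℝ F z 1 - Complex.I * fderiv ℝ F z Complex.I) / 2)‖)
    (hpdb : pdb = fun z => ‖
      ((fderiv ℝ F z 1 + Complex.I * fderiv ℝ F z Complex.I) / 2)‖)
    (hW12 : MeasureTheory.IntegrableOn (fun z => pd z ^ 2 + pdb z ^ 2) Rn volume)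
    (hdiff : ∀ z ∈ Rn, DifferentiableAt ℝ F z)
    (hdil : ∀ z ∈ Rn, pdb z ≤ δ * pd z)
    (hslice : ∀ y ∈ Set.Icc (-(1 / (2 * (n : ℝ)))) (1 / (2 * (n : ℝ))),
      L ≤ ∫ x in (0 : ℝ)..l, pd ((x : ℂ) + (y : ℂ) * Complex.I) * (1 - δ))
    (harea : ∫ z in Rn, (pd z ^ 2 - pdb z ^ 2) ∂volume ≤ S) :
    L ≤ Real.sqrt S * Real.sqrt (l * (n : ℝ) / (1 + (1 + (n : ℝ)) ^ 4)) := by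
  have hn0 : (0:ℝ) < (n:ℝ) := by exact_mod_cast Nat.lt_of_lt_of_le Nat.zero_lt_one hn
  set a : ℝ := 1 / (2 * (n:ℝ)) with ha_def
  have ha : 0 < a := by positivity
  set ε : ℝ := 1 / ((n : ℝ) + 1) ^ 4 with hε_def
  have hε_pos : 0 < ε := by positivity
  have hεinv : ε * ((n : ℝ) + 1) ^ 4 = 1 := by
    rw [hε_def]; field_simp
  have hn1 : (1:ℝ) ≤ (n:ℝ) := by exact_mod_cast hn
  have h16 : (16:ℝ) ≤ ((n : ℝ) + 1) ^ 4 := by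
    have h1 : (2:ℝ) ≤ (n:ℝ) + 1 := by linarith
    calc (16:ℝ) = 2 ^ 4 := by norm_num
      _ ≤ ((n:ℝ) + 1) ^ 4 := pow_le_pow_left₀ (by norm_num) h1 4
  have hε_le : ε ≤ 1/2 := by
    rw [hε_def]
    rw [div_le_div_iff₀ (by positivity) (by norm_num)]
    linarith
  have hδ0 : 0 ≤ δ := by rw [hδ]; linarith
  have hδ1 : δ < 1 := by rw [hδ]; linarith
  -- measurability
  have m1 : Measurable fun z : ℂ => fderiv ℝ F z 1 := measurable_fderiv_apply_const ℝ F 1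
  have m2 : Measurable fun z : ℂ => fderiv ℝ F z Complex.I :=
    measurable_fderiv_apply_const ℝ F Complex.I
  have m_pd : Measurable pd := by
    rw [hpd]
    exact continuous_norm.measurable.comp
      ((m1.sub (m2.const_mul Complex.I)).div_const 2)
  have m_pdb : Measurable pdb := by
    rw [hpdb]
    exact continuous_norm.measurable.comp
      ((m1.add (m2.const_mul Complex.I)).div_const 2)
  have pd_nonneg : ∀ z, 0 ≤ pd z := by intro z; rw [hpd]; exact norm_nonneg _
  have pdb_nonneg : ∀ z, 0 ≤ pdb z := by intro z; rw [hpdb]; exact norm_nonneg _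
  -- the rectangle as a preimage
  set s : Set ℝ := Set.Icc 0 l with hs_def
  set t : Set ℝ := Set.Icc (-a) a with ht_def
  set e : ℂ ≃ᵐ ℝ × ℝ := Complex.measurableEquivRealProd with he_def
  have hMP : MeasurePreserving e volume volume := Complex.volume_preserving_equiv_real_prod
  have hemb : MeasurableEmbedding (e : ℂ → ℝ × ℝ) := e.measurableEmbedding
  have hRe : Rn = e ⁻¹' (s ×ˢ t) := by
    rw [hRn]
    ext z
    simp only [he_def, Set.mem_preimage, Complex.measurableEquivRealProd_apply, Set.mem_prod,
      Set.mem_setOf_eq, Set.mem_Icc]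
  -- measure of the rectangle
  have hms : MeasurableSet (s ×ˢ t) := (measurableSet_Icc).prod measurableSet_Icc
  have hvol_prod : volume (s ×ˢ t) = ENNReal.ofReal l * ENNReal.ofReal (2 * a) := by
    rw [Measure.volume_eq_prod, Measure.prod_prod, hs_def, ht_def, Real.volume_Icc,
      Real.volume_Icc]
    ring_nf
  have hvolRn : volume Rn = ENNReal.ofReal l * ENNReal.ofReal (2 * a) := by
    rw [hRe, hMP.measure_preimage hms.nullMeasurableSet, hvol_prod]
  have hvolRn_lt : volume Rn < ⊤ := by
    rw [hvolRn]; exact ENNReal.mul_lt_top ENNReal.ofReal_lt_top ENNReal.ofReal_lt_top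
  have hvolRn_toReal : (volume Rn).toReal = l * (2 * a) := by
    rw [hvolRn, ← ENNReal.ofReal_mul hl.le, ENNReal.toReal_ofReal (by positivity)]
  -- integrability facts
  have int_const : IntegrableOn (fun _ : ℂ => (1:ℝ)) Rn volume :=
    integrableOn_const hvolRn_lt.ne
  have int_pd2 : IntegrableOn (fun z => pd z ^ 2) Rn volume := by
    refine hW12.mono' ((m_pd.pow_const 2).aestronglyMeasurable) ?_
    filter_upwards with z
    have := pdb_nonneg z
    simp only [Real.norm_eq_abs, abs_of_nonneg (sq_nonneg (pd z))]
    nlinarith [sq_nonneg (pdb z)]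
  have int_pdb2 : IntegrableOn (fun z => pdb z ^ 2) Rn volume := by
    refine hW12.mono' ((m_pdb.pow_const 2).aestronglyMeasurable) ?_
    filter_upwards with z
    simp only [Real.norm_eq_abs, abs_of_nonneg (sq_nonneg (pdb z))]
    nlinarith [sq_nonneg (pd z)]
  have int_pd : IntegrableOn pd Rn volume := by
    refine (int_pd2.add int_const).mono' m_pd.aestronglyMeasurable ?_
    filter_upwards with z
    have h0 := pd_nonneg z
    simp only [Real.norm_eq_abs, abs_of_nonneg h0]
    simp only [Pi.add_apply]
    nlinarith [sq_nonneg (pd z - 1)]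
  -- key quantities
  set A : ℝ := ∫ z in Rn, pd z ^ 2 ∂volume with hA_def
  set J : ℝ := ∫ z in Rn, pd z ∂volume with hJ_def
  have hA_nonneg : 0 ≤ A := by
    apply setIntegral_nonneg_of_ae_restrict
    filter_upwards with z using sq_nonneg _
  have hJ_nonneg : 0 ≤ J := by
    apply setIntegral_nonneg_of_ae_restrict
    filter_upwards with z using pd_nonneg z
  -- area bound: (1 - δ^2) * A ≤ S
  have hRnm : MeasurableSet Rn := by rw [hRe]; exact hemb.measurable hms
  have hAS : (1 - δ^2) * A ≤ S := by
    have h1 : (1 - δ^2) * A = ∫ z in Rn, (1 - δ^2) * pd z ^ 2 ∂volume := by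
      rw [hA_def, ← integral_const_mul]
    have h2 : ∫ z in Rn, (1 - δ^2) * pd z ^ 2 ∂volume
        ≤ ∫ z in Rn, (pd z ^ 2 - pdb z ^ 2) ∂volume := by
      refine setIntegral_mono_on (int_pd2.const_mul _) (int_pd2.sub int_pdb2) hRnm ?_
      intro z hz
      have h3 := hdil z hz
      have h4 := pdb_nonneg z
      nlinarith [pd_nonneg z]
    rw [h1]; exact le_trans h2 harea
  -- Cauchy–Schwarz: J ≤ √A * √(vol Rn)
  have hCS : J ≤ Real.sqrt A * Real.sqrt (l * (2 * a)) := by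
    have h2 : (2:ℝ).HolderConjugate 2 := Real.HolderConjugate.two_two
    have hfm : MemLp pd (ENNReal.ofReal 2) (volume.restrict Rn) := by
      rw [show ENNReal.ofReal 2 = 2 by norm_num]
      exact (memLp_two_iff_integrable_sq m_pd.aestronglyMeasurable).2 int_pd2
    haveI : IsFiniteMeasure (volume.restrict Rn) :=
      ⟨by rwa [Measure.restrict_apply_univ]⟩
    have hgm : MemLp (fun _ : ℂ => (1:ℝ)) (ENNReal.ofReal 2) (volume.restrict Rn) := by
      rw [show ENNReal.ofReal 2 = 2 by norm_num]
      exact memLp_const 1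
    have hcs := integral_mul_le_Lp_mul_Lq_of_nonneg h2
      (Filter.Eventually.of_forall pd_nonneg)
      (Filter.Eventually.of_forall fun _ => zero_le_one) hfm hgm
    simp only [mul_one, Real.one_rpow] at hcs
    have e1 : ∫ z, pd z ^ (2:ℝ) ∂(volume.restrict Rn) = A := by
      rw [hA_def]
      refine integral_congr_ae (Filter.Eventually.of_forall fun z => ?_)
      show pd z ^ (2:ℝ) = pd z ^ (2:ℕ)
      rw [show (2:ℝ) = ((2:ℕ):ℝ) by norm_num, Real.rpow_natCast]
    have e2 : ∫ _ : ℂ, (1:ℝ) ∂(volume.restrict Rn) = l * (2 * a) := by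
      rw [integral_const, smul_eq_mul, mul_one, measureReal_def, Measure.restrict_apply_univ, hvolRn_toReal]
    rw [show (∫ z in Rn, (1:ℝ)) = ∫ _ : ℂ, (1:ℝ) ∂(volume.restrict Rn) from rfl] at e2
    rw [e1, e2] at hcs
    calc J ≤ A ^ (1/(2:ℝ)) * (l * (2*a)) ^ (1/(2:ℝ)) := hcs
      _ = Real.sqrt A * Real.sqrt (l * (2*a)) := by
          rw [Real.sqrt_eq_rpow, Real.sqrt_eq_rpow]
  -- Fubini: L * (2*a) ≤ (1 - δ) * J
  have hFub : L * (2 * a) ≤ (1 - δ) * J := by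
    set G : ℝ × ℝ → ℝ := fun p => pd (e.symm p) with hG_def
    have hGe : ∀ z : ℂ, G (e z) = pd z := fun z => by rw [hG_def]; simp
    -- transport integrability
    have hintG : Integrable G ((volume.restrict s).prod (volume.restrict t)) := by
      rw [Measure.prod_restrict]
      have hcomp : Integrable (G ∘ e) (volume.restrict Rn) := by
        have hge : (G ∘ e) = pd := funext hGe
        rw [hge]; exact int_pd
      have h := ((hMP.restrict_preimage_emb hemb (s ×ˢ t)).integrable_comp_emb hemb
        (g := G)).1
      rw [← hRe] at h
      have h2 := h hcomp
      rwa [Measure.volume_eq_prod ℝ ℝ] at h2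
    -- transport the integral
    have hJG : J = ∫ p in s ×ˢ t, G p ∂volume := by
      rw [hJ_def, hRe]
      rw [← hMP.setIntegral_preimage_emb hemb G (s ×ˢ t)]
      exact setIntegral_congr_fun (hemb.measurable hms) fun z _ => (hGe z).symm
    have hJiter : J = ∫ y in t, ∫ x in s, G (x, y) ∂volume ∂volume := by
      rw [hJG, Measure.volume_eq_prod, ← Measure.prod_restrict]
      exact integral_prod_symm G hintG
    -- slice bound
    have hsliceG : ∀ y ∈ t, L ≤ (1 - δ) * ∫ x in s, G (x, y) ∂volume := by
      intro y hy
      have h1 := hslice y (by rwa [ht_def] at hy)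
      have h2 : ∫ x in (0:ℝ)..l, pd ((x : ℂ) + (y : ℂ) * Complex.I) * (1 - δ)
          = (1 - δ) * ∫ x in s, G (x, y) ∂volume := by
        rw [intervalIntegral.integral_of_le hl.le, hs_def, ← integral_Icc_eq_integral_Ioc]
        rw [← integral_const_mul]
        refine setIntegral_congr_fun measurableSet_Icc fun x _ => ?_
        rw [hG_def]
        simp only []
        rw [Complex.measurableEquivRealProd_symm_apply]
        rw [show Complex.mk x y = (x : ℂ) + (y : ℂ) * Complex.I from Complex.mk_eq_add_mul_I x y]
        ring
      rw [h2] at h1; exact h1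
    -- integrate the slice bound in y
    have hinner : Integrable (fun y => (1 - δ) * ∫ x in s, G (x, y) ∂volume)
        (volume.restrict t) := by
      exact (hintG.integral_prod_right).const_mul _
    have hconst : IntegrableOn (fun _ : ℝ => L) t volume :=
      integrableOn_const (by rw [ht_def, Real.volume_Icc]; exact ENNReal.ofReal_ne_top)
    have hmono : ∫ _ in t, L ∂volume ≤ ∫ y in t, (1 - δ) * ∫ x in s, G (x, y) ∂volume ∂volume :=
      setIntegral_mono_on hconst hinner measurableSet_Icc hsliceG
    have hconst_val : ∫ _ in t, L ∂volume = (2 * a) * L := by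
      rw [setIntegral_const, smul_eq_mul, ht_def, measureReal_def, Real.volume_Icc,
        ENNReal.toReal_ofReal (by linarith)]
      ring_nf
    have hRHS : ∫ y in t, (1 - δ) * ∫ x in s, G (x, y) ∂volume ∂volume = (1 - δ) * J := by
      rw [integral_const_mul, ← hJiter]
    rw [hconst_val, hRHS] at hmono
    linarith
  -- combine everything
  set b : ℝ := 2 * a with hb_def
  have hb_pos : 0 < b := by positivity
  have hbn : b * (n:ℝ) = 1 := by rw [hb_def, ha_def]; field_simp
  have hJsq : J ^ 2 ≤ A * (l * b) := by
    have hALb : 0 ≤ A * (l * b) := mul_nonneg hA_nonneg (by positivity)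
    have h1 : J ≤ Real.sqrt (A * (l * b)) := by
      rw [Real.sqrt_mul hA_nonneg]; exact hCS
    exact (Real.le_sqrt hJ_nonneg hALb).1 h1
  have hδ1' : (0:ℝ) ≤ 1 - δ := by linarith
  have hL2 : L ^ 2 * b ≤ (1 - δ)^2 * (A * l) := by
    have h1 : (L * b)^2 ≤ ((1-δ)*J)^2 := by
      have h0 : 0 ≤ L * b := mul_nonneg hL hb_pos.le
      have h0' : L * b ≤ (1-δ)*J := hFub
      nlinarith [mul_nonneg hδ1' hJ_nonneg]
    have h3 := mul_le_mul_of_nonneg_left hJsq (sq_nonneg (1-δ))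
    have h2 : (L^2*b)*b ≤ ((1-δ)^2*(A*l))*b := by
      calc (L^2*b)*b = (L*b)^2 := by ring
        _ ≤ ((1-δ)*J)^2 := h1
        _ = (1-δ)^2 * J^2 := by ring
        _ ≤ (1-δ)^2 * (A*(l*b)) := h3
        _ = ((1-δ)^2*(A*l))*b := by ring
    exact le_of_mul_le_mul_right h2 hb_pos
  have hD : (0:ℝ) < 1 + (1 + (n:ℝ))^4 := by positivity
  have hkey : (1-δ)^2 * (1 + (1+(n:ℝ))^4) ≤ 1 - δ^2 := by
    rw [hδ]
    have h1 : ε * ((1:ℝ)+(n:ℝ))^4 = 1 := by rw [show ((1:ℝ)+(n:ℝ)) = ((n:ℝ)+1) by ring]; exact hεinv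
    nlinarith [hε_le, hε_pos]
  have hL2n : L^2 ≤ (1-δ)^2 * (A*l) * (n:ℝ) := by
    calc L^2 = (L^2 * b) * (n:ℝ) := by rw [mul_assoc, hbn, mul_one]
      _ ≤ ((1-δ)^2 * (A*l)) * (n:ℝ) := mul_le_mul_of_nonneg_right hL2 hn0.le
  rw [← Real.sqrt_mul hS]
  rw [show S * (l * (n:ℝ) / (1 + (1+(n:ℝ))^4)) = S * (l*(n:ℝ)) / (1 + (1+(n:ℝ))^4) by ring]
  rw [Real.le_sqrt hL (by positivity)]
  rw [le_div_iff₀ hD]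
  have hAln : (0:ℝ) ≤ A * (l * (n:ℝ)) := mul_nonneg hA_nonneg (by positivity)
  calc L^2 * (1 + (1+(n:ℝ))^4) ≤ ((1-δ)^2 * (A*l) * (n:ℝ)) * (1 + (1+(n:ℝ))^4) :=
        mul_le_mul_of_nonneg_right hL2n hD.le
    _ = ((1-δ)^2 * (1 + (1+(n:ℝ))^4)) * (A * (l * (n:ℝ))) := by ring
    _ ≤ (1 - δ^2) * (A * (l * (n:ℝ))) := mul_le_mul_of_nonneg_right hkey hAln
    _ = ((1 - δ^2) * A) * (l * (n:ℝ)) := by ring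
    _ ≤ S * (l * (n:ℝ)) := mul_le_mul_of_nonneg_right hAS (by positivity)
end
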